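/- arXiv:2406.05121 — 3 statements merged into one kernel-verified Lean document; each statement's English description precedes it below -/
import Mathlib

section
/- Let 𝔉 = {χ} ∪ Ψ be a semi-discrete Parseval frame. Then every f ∈ L²(ℝᵈ) satisfies, for all N ∈ ℕ₀, the energy decomposition Σ_{n=0}^{N-1} Σ_{p∈Ψⁿ} ‖(U[p]f)*χ‖₂² + Σ_{p∈Ψ^N} ‖U[p]f‖₂² = ‖f‖₂². Consequently Σ_{p∈𝒫_Ψ} ‖(U[p]f)*χ‖₂² ≤ ‖f‖₂², and equality holds if and only if lim_{N→∞} Σ_{p∈Ψ^N} ‖U[p]f‖₂² = 0. -/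
open MeasureTheory Filter
open scoped ENNReal RealInnerProductSpace

noncomputable section

/-- Euclidean space ℝ^d. -/
abbrev Ed (d : ℕ) := EuclideanSpace ℝ (Fin d)

/-- Convolution of two complex-valued functions on ℝ^d. -/
noncomputable def conv {d : ℕ} (f g : Ed d → ℂ) : Ed d → ℂ :=
  MeasureTheory.convolution f g (ContinuousLinearMap.mul ℂ ℂ) volume

/-- Squared L² norm (the "energy") of a function, valued in ℝ≥0∞. -/
noncomputable def en {d : ℕ} (f : Ed d → ℂ) : ℝ≥0∞ := (eLpNorm f 2 volume) ^ 2

/-- The scattering propagator along a path (a list of filters):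
`U[e] f = f`, `U[(ψ₁,…,ψ_N)] f = |…|f*ψ₁|…*ψ_N|`. -/
noncomputable def Uprop {d : ℕ} : List (Ed d → ℂ) → (Ed d → ℂ) → (Ed d → ℂ)
  | [], f => f
  | ψ :: rest, f => Uprop rest (fun x => (‖conv f ψ x‖ : ℂ))

/-- Scattering propagator along a path of indices `p : Fin N → ι` in a filter family `F`. -/
noncomputable def Upath {d : ℕ} {ι : Type*} (F : ι → Ed d → ℂ) {N : ℕ}
    (p : Fin N → ι) (f : Ed d → ℂ) : Ed d → ℂ :=
  Uprop (List.ofFn fun i => F (p i)) f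

/-- Energy remainder `W_N[Φ](f)` (ℝ≥0∞-valued), for the subfamily of filters indexed by `Φ`. -/
noncomputable def WNe {d : ℕ} (ψ : ℕ → Ed d → ℂ) (Φ : Set ℕ) (N : ℕ)
    (f : Ed d → ℂ) : ℝ≥0∞ :=
  ∑' p : Fin N → Φ, en (Upath ψ (fun i => ((p i : ℕ))) f)
lemma en_norm {d : ℕ} (g : Ed d → ℂ) : en (fun x => (‖g x‖ : ℂ)) = en g := by
  unfold en
  congr 1
  apply eLpNorm_congr_norm_ae
  filter_upwards with x
  simp

lemma conv_aesm {d : ℕ} {f g : Ed d → ℂ} (hf : AEStronglyMeasurable f volume)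
    (hg : AEStronglyMeasurable g volume) :
    AEStronglyMeasurable (conv f g) volume :=
  (hf.convolution_integrand (ContinuousLinearMap.mul ℂ ℂ) hg).integral_prod_right'

lemma Uprop_append {d : ℕ} (l : List (Ed d → ℂ)) (a : Ed d → ℂ) (f : Ed d → ℂ) :
    Uprop (l ++ [a]) f = fun x => (‖conv (Uprop l f) a x‖ : ℂ) := by
  induction l generalizing f with
  | nil => rfl
  | cons b t ih => simp only [List.cons_append, Uprop]; exact ih _

lemma Upath_snoc {d : ℕ} (ψ : ℕ → Ed d → ℂ) {N : ℕ} (q : Fin N → ℕ) (n : ℕ) (f : Ed d → ℂ) :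
    Upath ψ (Fin.snoc q n) f = fun x => (‖conv (Upath ψ q f) (ψ n) x‖ : ℂ) := by
  unfold Upath
  rw [List.ofFn_succ']
  simp [Fin.snoc_castSucc, Fin.snoc_last, List.concat_eq_append, Uprop_append]

lemma Upath_zero {d : ℕ} (ψ : ℕ → Ed d → ℂ) (p : Fin 0 → ℕ) (f : Ed d → ℂ) :
    Upath ψ p f = f := by
  unfold Upath
  simp [Uprop]

/-- Energy decomposition: for a semi-discrete Parseval frame `{χ} ∪ Ψ`, every `f ∈ L²`
satisfies, for all `N`,
`Σ_{n<N} Σ_{p∈Ψⁿ} ‖(U[p]f)*χ‖₂² + Σ_{p∈Ψ^N} ‖U[p]f‖₂² = ‖f‖₂²`.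
Consequently the total scattering energy is `≤ ‖f‖₂²`, with equality iff
`Σ_{p∈Ψ^N} ‖U[p]f‖₂² → 0`. -/
theorem stmt2 {d : ℕ} (χ : Ed d → ℂ) (ψ : ℕ → Ed d → ℂ)
    (hχ : Integrable χ volume ∧ MemLp χ 2 volume)
    (hψ : ∀ n, Integrable (ψ n) volume ∧ MemLp (ψ n) 2 volume)
    (hParseval : ∀ f : Ed d → ℂ, MemLp f 2 volume →
      en (conv f χ) + ∑' n : ℕ, en (conv f (ψ n)) = en f) :
    ∀ f : Ed d → ℂ, MemLp f 2 volume →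
      (∀ N : ℕ,
        (∑ n ∈ Finset.range N, ∑' p : Fin n → ℕ, en (conv (Upath ψ p f) χ))
          + ∑' p : Fin N → ℕ, en (Upath ψ p f) = en f) ∧
      (∑' N : ℕ, ∑' p : Fin N → ℕ, en (conv (Upath ψ p f) χ)) ≤ en f ∧
      ((∑' N : ℕ, ∑' p : Fin N → ℕ, en (conv (Upath ψ p f) χ)) = en f ↔
        Tendsto (fun N : ℕ => ∑' p : Fin N → ℕ, en (Upath ψ p f)) atTop (nhds 0)) := by
  intro f hf
  set A : ℕ → ℝ≥0∞ := fun n => ∑' p : Fin n → ℕ, en (conv (Upath ψ p f) χ) with hA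
  set B : ℕ → ℝ≥0∞ := fun N => ∑' p : Fin N → ℕ, en (Upath ψ p f) with hB
  -- one-step memℒp
  have hstep_mem : ∀ g : Ed d → ℂ, MemLp g 2 volume → ∀ n,
      MemLp (fun x => (‖conv g (ψ n) x‖ : ℂ)) 2 volume := by
    intro g hg n
    have hma : AEStronglyMeasurable (conv g (ψ n)) volume :=
      conv_aesm hg.aestronglyMeasurable (hψ n).1.aestronglyMeasurable
    have hen : en (conv g (ψ n)) ≤ en g :=
      calc en (conv g (ψ n)) ≤ ∑' m, en (conv g (ψ m)) := ENNReal.le_tsum n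
        _ ≤ en (conv g χ) + ∑' m, en (conv g (ψ m)) := le_add_self
        _ = en g := hParseval g hg
    have hlt : en (conv g (ψ n)) < ⊤ :=
      lt_of_le_of_lt hen (by unfold en; exact ENNReal.pow_lt_top (n := 2) hg.2)
    have h2 : eLpNorm (conv g (ψ n)) 2 volume < ⊤ := by
      by_contra h
      rw [not_lt, top_le_iff] at h
      rw [en, h] at hlt
      rw [show ((⊤:ℝ≥0∞) ^ 2 = ⊤) by simp [pow_two]] at hlt
      exact lt_irrefl _ hlt
    constructor
    · exact Complex.continuous_ofReal.comp_aestronglyMeasurable hma.norm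
    · calc eLpNorm (fun x => (‖conv g (ψ n) x‖ : ℂ)) 2 volume
          = eLpNorm (conv g (ψ n)) 2 volume := by
            apply eLpNorm_congr_norm_ae
            filter_upwards with x
            simp
        _ < ⊤ := h2
  -- MemLp along all paths
  have hmem : ∀ N (p : Fin N → ℕ), MemLp (Upath ψ p f) 2 volume := by
    intro N
    induction N with
    | zero => intro p; rw [Upath_zero]; exact hf
    | succ N ih =>
      intro p
      have hpe : Upath ψ p f
          = fun x => (‖conv (Upath ψ (Fin.init p) f) (ψ (p (Fin.last N))) x‖ : ℂ) := by
        conv_lhs => rw [← Fin.snoc_init_self p]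
        rw [Upath_snoc]
      rw [hpe]
      exact hstep_mem _ (ih _) _
  -- the recursion B N = A N + B (N+1)
  have hstepB : ∀ N, B N = A N + B (N + 1) := by
    intro N
    have h1 : B (N + 1) = ∑' (q : Fin N → ℕ) (n : ℕ), en (conv (Upath ψ q f) (ψ n)) := by
      simp only [hB]
      rw [← Equiv.tsum_eq (Fin.snocEquiv (fun _ : Fin (N+1) => ℕ))
        (fun p : Fin (N+1) → ℕ => en (Upath ψ p f))]
      rw [ENNReal.tsum_prod']
      rw [ENNReal.tsum_comm]
      congr 1
      funext q
      congr 1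
      funext n
      have : (Fin.snocEquiv (fun _ : Fin (N+1) => ℕ)) (n, q) = Fin.snoc q n := by
        funext i; simp [Fin.snocEquiv]
      rw [this, Upath_snoc, en_norm]
    rw [h1]
    simp only [hB, hA]
    rw [← ENNReal.tsum_add]
    exact tsum_congr fun q => (hParseval (Upath ψ q f) (hmem N q)).symm
  -- the decomposition
  have hdecomp : ∀ N, (∑ n ∈ Finset.range N, A n) + B N = en f := by
    intro N
    induction N with
    | zero =>
      simp only [Finset.range_zero, Finset.sum_empty, zero_add, hB]
      haveI : Unique (Fin 0 → ℕ) := Pi.uniqueOfIsEmpty _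
      rw [tsum_eq_single (default : Fin 0 → ℕ)
        (fun b hb => absurd (Subsingleton.elim b default) hb)]
      rw [Upath_zero]
    | succ N ih =>
      rw [Finset.sum_range_succ, add_assoc, ← hstepB N, ih]
  have henf : en f ≠ ⊤ := by
    unfold en; exact (ENNReal.pow_lt_top (n := 2) hf.2).ne
  have hBanti : Antitone B := antitone_nat_of_succ_le fun N => by
    rw [hstepB N]; exact le_add_self
  have hkey : (∑' N, A N) + ⨅ N, B N = en f := by
    apply le_antisymm
    · rw [ENNReal.tsum_eq_iSup_nat, ENNReal.iSup_add]
      apply iSup_le; intro N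
      calc (∑ n ∈ Finset.range N, A n) + ⨅ M, B M
          ≤ (∑ n ∈ Finset.range N, A n) + B N := add_le_add_right (iInf_le _ N) _
        _ = en f := hdecomp N
    · rw [ENNReal.add_iInf]
      apply le_iInf; intro N
      calc en f = (∑ n ∈ Finset.range N, A n) + B N := (hdecomp N).symm
        _ ≤ (∑' n, A n) + B N := add_le_add_left (ENNReal.sum_le_tsum _) _
  have htendsto : Tendsto B atTop (nhds (⨅ N, B N)) := tendsto_atTop_iInf hBanti
  refine ⟨hdecomp, ?_, ?_⟩
  · calc (∑' N, A N) ≤ (∑' N, A N) + ⨅ N, B N := le_self_add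
      _ = en f := hkey
  · constructor
    · intro h
      have h0 : (⨅ N, B N) = 0 := by
        have : (∑' N, A N) + ⨅ N, B N = (∑' N, A N) + 0 := by
          rw [add_zero, hkey, h]
        exact (ENNReal.add_right_inj (by rw [h]; exact henf)).mp this
      rw [h0] at htendsto
      exact htendsto
    · intro h
      have h0 : (⨅ N, B N) = 0 := tendsto_nhds_unique htendsto h
      rw [h0, add_zero] at hkey
      exact hkey
end
end

section
/- Let 𝔉 = {χ} ∪ Ψ be a semi-discrete Parseval frame whose windowed scattering transform 𝒮[𝔉] is norm-preserving, i.e. Σ_{p∈𝒫_Ψ} ‖(U[p]f)*χ‖₂² = ‖f‖₂² for all f ∈ L²(ℝᵈ). Then 𝒮[𝔉] is non-expansive: Σ_{p∈𝒫_Ψ} ‖(U[p]f)*χ − (U[p]g)*χ‖₂² ≤ ‖f−g‖₂² for all f, g ∈ L²(ℝᵈ). -/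
open MeasureTheory Filter
open scoped ENNReal RealInnerProductSpace

noncomputable section

namespace Stmt4Aux

variable {d : ℕ}

lemma conv_aesm {f g : Ed d → ℂ} (hf : AEStronglyMeasurable f volume)
    (hg : AEStronglyMeasurable g volume) : AEStronglyMeasurable (conv f g) volume :=
  (hf.convolution_integrand (ContinuousLinearMap.mul ℂ ℂ) hg).integral_prod_right'

lemma holder_int {f h : Ed d → ℂ} (hf : MemLp f 2 volume) (hh : MemLp h 2 volume)
    (x : Ed d) : Integrable (fun t => f t * h (x - t)) volume := by
  have htr : MemLp (fun t => h (x - t)) 2 volume :=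
    hh.comp_measurePreserving (Measure.measurePreserving_sub_left volume x)
  have hpqr : (1 : ℝ≥0∞) / 1 = 1 / 2 + 1 / 2 := by
    rw [ENNReal.div_add_div_same, one_div_one, one_add_one_eq_two]
    exact (ENNReal.div_self two_ne_zero ENNReal.ofNat_ne_top).symm
  have := htr.smul hf (r := 1)
  rw [memLp_one_iff_integrable] at this
  exact this.congr (Eventually.of_forall fun t => by simp [Pi.smul_apply', smul_eq_mul])

lemma conv_sub {f g h : Ed d → ℂ} (hf : MemLp f 2 volume) (hg : MemLp g 2 volume)
    (hh : MemLp h 2 volume) (x : Ed d) :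
    conv (fun y => f y - g y) h x = conv f h x - conv g h x := by
  unfold conv convolution
  simp only [ContinuousLinearMap.mul_apply', sub_mul]
  exact integral_sub (holder_int hf hh x) (holder_int hg hh x)

/-- the complex modulus as a map to ℂ -/
def absC (F : Ed d → ℂ) : Ed d → ℂ := fun x => (‖F x‖ : ℂ)

lemma eLpNorm_absC (F : Ed d → ℂ) : eLpNorm (absC F) 2 volume = eLpNorm F 2 volume := by
  refine le_antisymm (eLpNorm_mono fun x => ?_) (eLpNorm_mono fun x => ?_) <;>
    simp [absC, Complex.norm_real]

lemma M2_absC {F : Ed d → ℂ} (hF : MemLp F 2 volume) : MemLp (absC F) 2 volume := by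
  refine ⟨Complex.continuous_ofReal.comp_aestronglyMeasurable hF.1.norm, ?_⟩
  rw [eLpNorm_absC]
  exact hF.2

lemma en_mono {F G : Ed d → ℂ} (h : ∀ x, ‖F x‖ ≤ ‖G x‖) : en F ≤ en G :=
  pow_le_pow_left' (eLpNorm_mono h) 2

section main

variable (χ : Ed d → ℂ) (ψ : ℕ → Ed d → ℂ)
variable (hχ2 : MemLp χ 2 volume) (hψ2 : ∀ n, MemLp (ψ n) 2 volume)
variable (hP : ∀ f : Ed d → ℂ, MemLp f 2 volume →
      en (conv f χ) + ∑' n : ℕ, en (conv f (ψ n)) = en f)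

include hψ2 hP in
lemma en_conv_psi_le {f : Ed d → ℂ} (hf : MemLp f 2 volume) (n : ℕ) :
    en (conv f (ψ n)) ≤ en f := by
  calc en (conv f (ψ n)) ≤ ∑' m : ℕ, en (conv f (ψ m)) := ENNReal.le_tsum n
  _ ≤ en (conv f χ) + ∑' m : ℕ, en (conv f (ψ m)) := le_add_self
  _ = en f := hP f hf

include hψ2 hP in
lemma M2_step {f : Ed d → ℂ} (hf : MemLp f 2 volume) (n : ℕ) :
    MemLp (absC (conv f (ψ n))) 2 volume := by
  refine M2_absC ⟨conv_aesm hf.1 (hψ2 n).1, ?_⟩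
  have h := en_conv_psi_le χ ψ hψ2 hP hf n
  have hfin : en (conv f (ψ n)) < ⊤ := h.trans_lt (by
    have := hf.2
    simpa [en] using (ENNReal.pow_lt_top this : eLpNorm f 2 volume ^ 2 < ⊤))
  rw [lt_top_iff_ne_top] at hfin ⊢
  intro hc
  exact hfin (by rw [en, hc]; simp)

include hψ2 hP in
lemma M2_Upath : ∀ (N : ℕ) (p : Fin N → ℕ) (f : Ed d → ℂ), MemLp f 2 volume →
    MemLp (Upath ψ p f) 2 volume := by
  intro N
  induction N with
  | zero => intro p f hf; simpa [Upath, Uprop] using hf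
  | succ N ih =>
    intro p f hf
    have : Upath ψ p f = Upath ψ (fun i => p i.succ) (absC (conv f (ψ (p 0)))) := by
      simp only [Upath, List.ofFn_succ, Uprop]
      rfl
    rw [this]
    exact ih _ _ (M2_step χ ψ hψ2 hP hf (p 0))

lemma Uprop_snoc (l : List (Ed d → ℂ)) (a : Ed d → ℂ) :
    ∀ f, Uprop (l ++ [a]) f = absC (conv (Uprop l f) a) := by
  induction l with
  | nil => intro f; rfl
  | cons b l ih => intro f; simp only [List.cons_append, Uprop]; exact ih _

lemma Upath_snoc {M : ℕ} (p : Fin M → ℕ) (n : ℕ) (f : Ed d → ℂ) :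
    Upath ψ (Fin.snoc p n) f = absC (conv (Upath ψ p f) (ψ n)) := by
  unfold Upath
  rw [List.ofFn_succ']
  simp only [Fin.snoc_castSucc, Fin.snoc_last, List.concat_eq_append]
  exact Uprop_snoc _ _ _

/-- the reindexing equivalence -/
def snocEquiv (M : ℕ) : ((Fin M → ℕ) × ℕ) ≃ (Fin (M + 1) → ℕ) where
  toFun q := Fin.snoc q.1 q.2
  invFun q := (fun i => q i.castSucc, q (Fin.last M))
  left_inv q := by simp
  right_inv q := by
    funext i
    refine Fin.lastCases ?_ (fun j => ?_) i <;> simp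

end main

end Stmt4Aux

/-- If the windowed scattering transform `𝒮[𝔉]` of a semi-discrete Parseval frame is
norm-preserving, then it is non-expansive:
`Σ_{p∈𝒫_Ψ} ‖S[p;χ]f − S[p;χ]g‖₂² ≤ ‖f−g‖₂²`. -/
theorem stmt4 {d : ℕ} (χ : Ed d → ℂ) (ψ : ℕ → Ed d → ℂ)
    (hχ : Integrable χ volume ∧ MemLp χ 2 volume)
    (hψ : ∀ n, Integrable (ψ n) volume ∧ MemLp (ψ n) 2 volume)
    (hParseval : ∀ f : Ed d → ℂ, MemLp f 2 volume →
      en (conv f χ) + ∑' n : ℕ, en (conv f (ψ n)) = en f)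
    (hNormPres : ∀ f : Ed d → ℂ, MemLp f 2 volume →
      (∑' N : ℕ, ∑' p : Fin N → ℕ, en (conv (Upath ψ p f) χ)) = en f) :
    ∀ f g : Ed d → ℂ, MemLp f 2 volume → MemLp g 2 volume →
      (∑' N : ℕ, ∑' p : Fin N → ℕ,
        en (fun x => conv (Upath ψ p f) χ x - conv (Upath ψ p g) χ x))
        ≤ en (fun x => f x - g x) := by
  classical
  intro f g hf hg
  open Stmt4Aux in
  have hχ2 : MemLp χ 2 volume := hχ.2
  have hψ2 : ∀ n, MemLp (ψ n) 2 volume := fun n => (hψ n).2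
  set Bf : ℕ → ℝ≥0∞ := fun N => ∑' p : Fin N → ℕ,
    en (fun x => conv (Upath ψ p f) χ x - conv (Upath ψ p g) χ x) with hB
  set A : ℕ → ℝ≥0∞ := fun M => ∑' p : Fin M → ℕ,
    en (fun x => Upath ψ p f x - Upath ψ p g x) with hA
  -- the one-step inequality
  have step : ∀ M, Bf M + A (M + 1) ≤ A M := by
    intro M
    have per : ∀ p : Fin M → ℕ,
        en (fun x => conv (Upath ψ p f) χ x - conv (Upath ψ p g) χ x)
          + ∑' n : ℕ, en (fun x => Upath ψ (Fin.snoc p n) f x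
              - Upath ψ (Fin.snoc p n) g x)
          ≤ en (fun x => Upath ψ p f x - Upath ψ p g x) := by
      intro p
      have hFp : MemLp (Upath ψ p f) 2 volume :=
        Stmt4Aux.M2_Upath χ ψ hψ2 hParseval M p f hf
      have hGp : MemLp (Upath ψ p g) 2 volume :=
        Stmt4Aux.M2_Upath χ ψ hψ2 hParseval M p g hg
      have hDp : MemLp (fun x => Upath ψ p f x - Upath ψ p g x) 2 volume := hFp.sub hGp
      have e1 : en (fun x => conv (Upath ψ p f) χ x - conv (Upath ψ p g) χ x)
          = en (conv (fun x => Upath ψ p f x - Upath ψ p g x) χ) := by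
        congr 1
        funext x
        rw [Stmt4Aux.conv_sub hFp hGp hχ2 x]
      have e2 : ∀ n : ℕ, en (fun x => Upath ψ (Fin.snoc p n) f x
            - Upath ψ (Fin.snoc p n) g x)
          ≤ en (conv (fun x => Upath ψ p f x - Upath ψ p g x) (ψ n)) := by
        intro n
        rw [Stmt4Aux.Upath_snoc ψ p n f, Stmt4Aux.Upath_snoc ψ p n g]
        refine Stmt4Aux.en_mono fun x => ?_
        rw [Stmt4Aux.conv_sub hFp hGp (hψ2 n) x]
        show ‖(‖conv (Upath ψ p f) (ψ n) x‖ : ℂ) - (‖conv (Upath ψ p g) (ψ n) x‖ : ℂ)‖ ≤ _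
        rw [← Complex.ofReal_sub, Complex.norm_real]
        exact abs_norm_sub_norm_le _ _
      calc en (fun x => conv (Upath ψ p f) χ x - conv (Upath ψ p g) χ x)
            + ∑' n : ℕ, en (fun x => Upath ψ (Fin.snoc p n) f x
                - Upath ψ (Fin.snoc p n) g x)
          ≤ en (conv (fun x => Upath ψ p f x - Upath ψ p g x) χ)
            + ∑' n : ℕ, en (conv (fun x => Upath ψ p f x - Upath ψ p g x) (ψ n)) := by
            rw [e1]; exact add_le_add_right (ENNReal.tsum_le_tsum e2) _
        _ = en (fun x => Upath ψ p f x - Upath ψ p g x) := hParseval _ hDp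
    have hsplit : A (M + 1) = ∑' p : Fin M → ℕ, ∑' n : ℕ,
        en (fun x => Upath ψ (Fin.snoc p n) f x - Upath ψ (Fin.snoc p n) g x) := by
      show (∑' q : Fin (M+1) → ℕ, en (fun x => Upath ψ q f x - Upath ψ q g x)) = _
      rw [← Equiv.tsum_eq (Stmt4Aux.snocEquiv M)
        (fun q : Fin (M+1) → ℕ => en (fun x => Upath ψ q f x - Upath ψ q g x))]
      rw [ENNReal.tsum_prod']
      rfl
    rw [hsplit, hB, ← ENNReal.tsum_add]
    exact ENNReal.tsum_le_tsum per
  have U0 : ∀ (p : Fin 0 → ℕ) (h : Ed d → ℂ), Upath ψ p h = h := by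
    intro p h
    simp [Upath, List.ofFn_zero, Uprop]
  have base : A 0 = en (fun x => f x - g x) := by
    show (∑' p : Fin 0 → ℕ, en (fun x => Upath ψ p f x - Upath ψ p g x)) = _
    rw [tsum_eq_single (fun i : Fin 0 => i.elim0)
      (fun b hb => (hb (funext fun i => i.elim0)).elim)]
    rw [U0, U0]
  have key : ∀ M, (∑ N ∈ Finset.range M, Bf N) + A M ≤ en (fun x => f x - g x) := by
    intro M
    induction M with
    | zero => simp [base]
    | succ M ih =>
      rw [Finset.sum_range_succ, add_assoc]
      calc (∑ N ∈ Finset.range M, Bf N) + (Bf M + A (M + 1))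
          ≤ (∑ N ∈ Finset.range M, Bf N) + A M := add_le_add_right (step M) _
        _ ≤ _ := ih
  calc (∑' N : ℕ, Bf N) = ⨆ M : ℕ, ∑ N ∈ Finset.range M, Bf N := ENNReal.tsum_eq_iSup_nat
    _ ≤ en (fun x => f x - g x) := iSup_le fun M => le_trans le_self_add (key M)
end
end

section
/- Let ρ ∈ [0,1), γ ∈ (0,1), r > 0, and A ∈ O_d(ℝ). Set ν := (2r(1−ρ)/(1+γ))·Aν*, where ν* is the unit vector with all entries 1/√d. Then for all ξ ∈ A·(H^ρ ∩ S_{r, r/γ}) one has ‖ξ − ν‖₂ ≤ α‖ξ‖₂, where α := √(1 − 4γ(1−ρ)²/(1+γ)²) ∈ (0,1). -/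
open MeasureTheory Filter
open scoped ENNReal RealInnerProductSpace

noncomputable section

/-- The unit vector `ν* ∈ ℝᵈ` with all entries `1/√d`. -/
noncomputable def nustar (d : ℕ) : Ed d := WithLp.toLp 2 (fun _ => 1 / Real.sqrt d)


open Matrix in
lemma dot_pres {d : ℕ} (A : Matrix (Fin d) (Fin d) ℝ)
    (hA : A ∈ Matrix.orthogonalGroup (Fin d) ℝ) (x y : Fin d → ℝ) :
    (A.mulVec x) ⬝ᵥ (A.mulVec y) = x ⬝ᵥ y := by
  have h : Aᵀ * A = 1 := by
    have := (Matrix.mem_orthogonalGroup_iff' (Fin d) ℝ).mp hA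
    simpa [Matrix.star_eq_conjTranspose] using this
  rw [Matrix.dotProduct_mulVec, ← Matrix.mulVec_transpose, Matrix.mulVec_mulVec, h,
    Matrix.one_mulVec]

lemma inner_pres {d : ℕ} (A : Matrix (Fin d) (Fin d) ℝ)
    (hA : A ∈ Matrix.orthogonalGroup (Fin d) ℝ) (x y : Ed d) :
    (inner ℝ (show Ed d from WithLp.toLp 2 (A.mulVec x)) (show Ed d from WithLp.toLp 2 (A.mulVec y)) : ℝ) = inner ℝ x y := by
  have h := dot_pres A hA x y
  simp only [PiLp.inner_apply, RCLike.inner_apply, conj_trivial]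
  simpa [dotProduct, mul_comm] using h

lemma norm_pres {d : ℕ} (A : Matrix (Fin d) (Fin d) ℝ)
    (hA : A ∈ Matrix.orthogonalGroup (Fin d) ℝ) (x : Ed d) :
    ‖(show Ed d from WithLp.toLp 2 (A.mulVec x))‖ = ‖x‖ := by
  have h := inner_pres A hA x x
  rw [real_inner_self_eq_norm_sq, real_inner_self_eq_norm_sq] at h
  nlinarith [norm_nonneg x, norm_nonneg (show Ed d from WithLp.toLp 2 (A.mulVec x))]

lemma norm_nustar {d : ℕ} (hd : 0 < d) : ‖nustar d‖ = 1 := by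
  have hd' : (0:ℝ) < d := by exact_mod_cast hd
  have : ‖nustar d‖ = Real.sqrt (∑ _i : Fin d, (1 / Real.sqrt d) ^ 2) := by
    rw [EuclideanSpace.norm_eq]
    congr 1
    refine Finset.sum_congr rfl fun i _ => ?_
    rw [show nustar d i = 1 / Real.sqrt d from rfl, Real.norm_eq_abs, sq_abs]
  rw [this, Finset.sum_const, Finset.card_univ, Fintype.card_fin]
  rw [div_pow, one_pow, Real.sq_sqrt hd'.le]
  rw [nsmul_eq_mul, mul_one_div, div_self hd'.ne']
  exact Real.sqrt_one

/-- For `ξ ∈ A·(H^ρ ∩ S_{r,r/γ})` with `A` orthogonal and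
`ν := (2r(1−ρ)/(1+γ))·Aν*`, one has `‖ξ − ν‖₂ ≤ α‖ξ‖₂`, where
`α := √(1 − 4γ(1−ρ)²/(1+γ)²) ∈ (0,1)`. -/
theorem stmt13 {d : ℕ} (hd : 0 < d) (ρ γ r : ℝ)
    (hρ0 : 0 ≤ ρ) (hρ1 : ρ < 1) (hγ0 : 0 < γ) (hγ1 : γ < 1) (hr : 0 < r)
    (A : Matrix (Fin d) (Fin d) ℝ) (hA : A ∈ Matrix.orthogonalGroup (Fin d) ℝ)
    (ξ : Ed d)
    (hξ : ∃ x : Ed d, (∀ i, 0 ≤ x i) ∧ (1 - ρ) * ‖x‖ ≤ (inner ℝ x (nustar d) : ℝ) ∧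
      r ≤ ‖x‖ ∧ ‖x‖ ≤ r / γ ∧ ξ = (WithLp.toLp 2 (A.mulVec x) : Ed d)) :
    Real.sqrt (1 - 4 * γ * (1 - ρ) ^ 2 / (1 + γ) ^ 2) ∈ Set.Ioo (0 : ℝ) 1 ∧
    ‖ξ - (2 * r * (1 - ρ) / (1 + γ)) • (show Ed d from WithLp.toLp 2 (A.mulVec (nustar d)))‖
      ≤ Real.sqrt (1 - 4 * γ * (1 - ρ) ^ 2 / (1 + γ) ^ 2) * ‖ξ‖ := by
  obtain ⟨x, hxpos, hxin, hxr, hxR, hxi⟩ := hξ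
  set β : ℝ := 1 - ρ with hβ
  have hβ0 : 0 < β := by simp [hβ]; linarith
  have hγp : (0:ℝ) < 1 + γ := by linarith
  set K : ℝ := 4 * γ * β ^ 2 / (1 + γ) ^ 2 with hK
  have hK0 : 0 < K := by positivity
  have hK1 : K < 1 := by
    rw [hK, div_lt_one (by positivity)]
    have hβ1 : β ≤ 1 := by simp [hβ]; linarith
    nlinarith [sq_nonneg (1 - γ),
      mul_nonneg (mul_nonneg hγ0.le (by linarith : (0:ℝ) ≤ 1 - β)) (by linarith : (0:ℝ) ≤ 1 + β)]
  have hα1 : Real.sqrt (1 - K) < 1 := by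
    have := Real.sqrt_lt_sqrt (by linarith) (show 1 - K < 1 by linarith)
    simpa using this
  have hα0 : 0 < Real.sqrt (1 - K) := Real.sqrt_pos.mpr (by linarith)
  refine ⟨⟨hα0, hα1⟩, ?_⟩
  set c : ℝ := 2 * r * (1 - ρ) / (1 + γ) with hc
  have hc0 : 0 < c := by positivity
  -- reduce to x via orthogonality
  have hsub : ξ - c • (show Ed d from WithLp.toLp 2 (A.mulVec (nustar d)))
      = (show Ed d from WithLp.toLp 2 (A.mulVec (x - c • nustar d : Ed d))) := by
    rw [hxi]
    have h2 : A.mulVec ((x : Fin d → ℝ) - c • (nustar d : Fin d → ℝ))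
        = A.mulVec x - c • A.mulVec (nustar d) := by
      rw [Matrix.mulVec_sub, Matrix.mulVec_smul]
    apply PiLp.ext
    intro i
    have h3 := congrFun h2 i
    simpa [smul_eq_mul] using h3.symm
  have hnξ : ‖ξ‖ = ‖x‖ := by rw [hxi]; exact norm_pres A hA x
  rw [hsub, norm_pres A hA, hnξ]
  -- now pure computation on x
  set s : ℝ := ‖x‖ with hs
  have hs0 : 0 < s := lt_of_lt_of_le hr hxr
  have hnu := norm_nustar (d := d) hd
  have hexp : ‖x - c • nustar d‖ ^ 2 = s ^ 2 - 2 * c * (inner ℝ x (nustar d) : ℝ) + c ^ 2 := by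
    rw [norm_sub_sq_real, real_inner_smul_right, norm_smul, Real.norm_eq_abs,
      abs_of_pos hc0, hnu]
    ring
  have hsq : ‖x - c • nustar d‖ ^ 2 ≤ (1 - K) * s ^ 2 := by
    rw [hexp]
    have h1 : β * s ≤ (inner ℝ x (nustar d) : ℝ) := hxin
    have h2 : s ≤ r / γ := hxR
    have h3 : r ≤ s := hxr
    have hγ' : γ * s ≤ r := by
      rw [le_div_iff₀ hγ0] at h2; linarith [mul_comm γ s ▸ h2]
    -- key quadratic: K*(s-r)*(s-r/γ) ≤ 0 and factorization
    have hfact : K * s ^ 2 - 2 * c * β * s + c ^ 2 = K * (s - r) * (s - r / γ) := by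
      rw [hK, hc, hβ]
      field_simp
      ring
    have hneg : K * (s - r) * (s - r / γ) ≤ 0 := by
      apply mul_nonpos_of_nonneg_of_nonpos
      · exact mul_nonneg hK0.le (by linarith)
      · linarith
    nlinarith [mul_le_mul_of_nonneg_left h1 hc0.le]
  calc ‖x - c • nustar d‖ = Real.sqrt (‖x - c • nustar d‖ ^ 2) := by
        rw [Real.sqrt_sq (norm_nonneg _)]
    _ ≤ Real.sqrt ((1 - K) * s ^ 2) := Real.sqrt_le_sqrt hsq
    _ = Real.sqrt (1 - K) * s := by
        rw [Real.sqrt_mul (by linarith), Real.sqrt_sq hs0.le]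
end
end
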